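/- For n ≥ 2, a_n = 1 + Σ_{j=1}^{n} b(n,j) + Σ_{d=0}^{n−2} Σ_{i=1}^{n−d} c(n−d, i), where a_n = |L_n|, b(n,j) counts members of B_n ending in j, and c(m,i) counts members of C_m ending in i. (The leading 1 accounts for the excluded permutation (n−1)(n−2)⋯1n.) -/

import Mathlib

open List

/-- `w` is a linear permutation of `[n] = {1,…,n}` written in one-line notation. -/
def IsPermOf (n : ℕ) (w : List ℕ) : Prop :=
  w.Perm ((List.range n).map (· + 1))

/-- occurrence of the vincular pattern 1̄2̄3 : positions a, a+1, c with c > a+1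
forming an increasing triple. -/
def Occ123 (w : List ℕ) : Prop :=
  ∃ a c, a + 1 < c ∧ c < w.length ∧
    w.getD a 0 < w.getD (a + 1) 0 ∧ w.getD (a + 1) 0 < w.getD c 0

/-- occurrence of the vincular pattern 41\overline{23} : positions a < b < c (and c+1)
with w_b < w_c < w_{c+1} < w_a. -/
def Occ4123 (w : List ℕ) : Prop :=
  ∃ a b c, a < b ∧ b < c ∧ c + 1 < w.length ∧
    w.getD b 0 < w.getD c 0 ∧ w.getD c 0 < w.getD (c + 1) 0 ∧
    w.getD (c + 1) 0 < w.getD a 0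

/-- occurrence of the vincular pattern 1\overline{23} : positions a < b (and b+1)
forming an increasing triple. -/
def Occ1_23 (w : List ℕ) : Prop :=
  ∃ a b, a < b ∧ b + 1 < w.length ∧
    w.getD a 0 < w.getD b 0 ∧ w.getD b 0 < w.getD (b + 1) 0

/-- occurrence of the vincular pattern \overline{23}41 : positions a, a+1, c, d with
a+1 < c < d and w_d < w_a < w_{a+1} < w_c. -/
def Occ2341 (w : List ℕ) : Prop :=
  ∃ a c d, a + 1 < c ∧ c < d ∧ d < w.length ∧
    w.getD d 0 < w.getD a 0 ∧ w.getD a 0 < w.getD (a + 1) 0 ∧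
    w.getD (a + 1) 0 < w.getD c 0

/-- a circular permutation (represented by any linear reading `w`) avoids
\overline{23}41 iff no cyclic rotation of `w` contains it. -/
def CircAvoids2341 (w : List ℕ) : Prop := ∀ k, ¬ Occ2341 (w.rotate k)

/-- the set `L_n` of linear permutations of `[n]` avoiding both 1̄2̄3 and 41\overline{23}. -/
def Lset (n : ℕ) : Set (List ℕ) :=
  {w | IsPermOf n w ∧ ¬ Occ123 w ∧ ¬ Occ4123 w}

/-- the permutation (n−1)(n−2)⋯1 n. -/
def excludedPerm (n : ℕ) : List ℕ :=
  ((List.range (n - 1)).map (· + 1)).reverse ++ [n]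

/-- `L_n^* = L_n \ {(n−1)(n−2)⋯1n}`. -/
def Lstar (n : ℕ) : Set (List ℕ) := Lset n \ {excludedPerm n}

/-- `B_n`: members of `L_n^*` in which 1 occurs to the right of n. -/
def Bset (n : ℕ) : Set (List ℕ) :=
  {w ∈ Lstar n | w.idxOf n < w.idxOf 1}

/-- `C_n`: members of `L_n^*` in which 1 occurs to the left of n and 2 to its right. -/
def Cset (n : ℕ) : Set (List ℕ) :=
  {w ∈ Lstar n | w.idxOf 1 < w.idxOf n ∧ w.idxOf n < w.idxOf 2}

/-- members of `B_n` ending in the two letters i, j. -/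
def Bnij (n i j : ℕ) : Set (List ℕ) :=
  {w ∈ Bset n | ∃ u, w = u ++ [i, j]}

/-- members of `C_n` ending in the two letters i, j. -/
def Cnij (n i j : ℕ) : Set (List ℕ) :=
  {w ∈ Cset n | ∃ u, w = u ++ [i, j]}

noncomputable def bcount (n i j : ℕ) : ℕ := (Bnij n i j).ncard
noncomputable def ccount (n i j : ℕ) : ℕ := (Cnij n i j).ncard

/-- `b(n,j)`: the number of members of `B_n` ending in the letter j. -/
noncomputable def bLast (n j : ℕ) : ℕ := Set.ncard {w ∈ Bset n | ∃ u, w = u ++ [j]}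

/-- `c(n,j)`: the number of members of `C_n` ending in the letter j. -/
noncomputable def cLast (n j : ℕ) : ℕ := Set.ncard {w ∈ Cset n | ∃ u, w = u ++ [j]}

/-- `V_n`: linear permutations of `[n]` avoiding both 1̄2̄3 and 1\overline{23}. -/
def Vset (n : ℕ) : Set (List ℕ) :=
  {w | IsPermOf n w ∧ ¬ Occ123 w ∧ ¬ Occ1_23 w}

/-- `v(n,j)`: the number of members of `V_n` ending in the letter j. -/
noncomputable def vcount (n j : ℕ) : ℕ := Set.ncard {w ∈ Vset n | ∃ u, w = u ++ [j]}

/-!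
`L_n` splits according to whether `n` precedes `1` (the set `B_n`) or not (`E_n` below), and
`E_n` according to whether `n` precedes `2` (the set `C_n`) or not (`F_n`). Excluding the
permutation `(n-1)⋯1 n` from `B_n` and `C_n` changes nothing, since its last letter is `n`.
In a member of `F_n` the letter `1` directly follows `2`: otherwise the letter after the earlier
of `1`, `2` would start an ascent before `n`, an occurrence of 1̄2̄3.
Merging this factor `2 1` into a single `1` and lowering all other letters by one is a bijection
`F_n → E_(n-1)` preserving the avoidance of both patterns, as an occurrence of either pattern
uses at most one letter of the factor `2 1`. Hence `|E_n| = |E_(n-1)| + |C_n|` with `|E_2| = 1`.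
-/

lemma List.insertIdx_append_length_add {α : Type*} (s t : List α) (i : ℕ) (x : α) :
    (s ++ t).insertIdx (s.length + i) x = s ++ t.insertIdx i x := by
  induction s with
  | nil => simp
  | cons y s ih => rw [List.length_cons, Nat.add_right_comm, List.cons_append,
      List.insertIdx_succ_cons, ih, List.cons_append]

lemma List.idxOf_lt_idxOf_iff_notMem {α : Type*} [BEq α] [LawfulBEq α] {s t : List α} {a b : α}
    (ha : a ∉ s) (hb : b ≠ a) :
    (s ++ a :: t).idxOf a < (s ++ a :: t).idxOf b ↔ b ∉ s := by
  rw [List.idxOf_append_of_notMem ha, List.idxOf_cons_self]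
  by_cases hbs : b ∈ s
  · simpa [List.idxOf_append_of_mem hbs, hbs] using (List.idxOf_lt_length_of_mem hbs).le
  · simp [List.idxOf_append_of_notMem hbs, List.idxOf_cons_ne _ hb.symm, hbs]

lemma List.getD_mem_of_lt {α : Type*} {l : List α} {i : ℕ} (d : α) (hi : i < l.length) :
    l.getD i d ∈ l := by
  rw [List.getD_eq_getElem _ _ hi]
  exact List.getElem_mem hi

lemma List.getD_idxOf {α : Type*} [BEq α] [LawfulBEq α] {l : List α} {x : α} (d : α)
    (hx : x ∈ l) : l.getD (l.idxOf x) d = x := by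
  rw [List.getD_eq_getElem _ _ (List.idxOf_lt_length_of_mem hx), List.getElem_idxOf]

lemma List.Nodup.getD_ne_of_ne_idxOf {α : Type*} [BEq α] [LawfulBEq α] {l : List α}
    (hl : l.Nodup) {i : ℕ} (hi : i < l.length) {x d : α} (h : i ≠ l.idxOf x) : l.getD i d ≠ x := by
  rintro rfl
  rw [List.getD_eq_getElem _ _ hi, hl.idxOf_getElem] at h
  exact h rfl

lemma Set.ncard_eq_sum_ncard_last {α : Type*} {S : Set (List α)} (hS : S.Finite) {t : Finset α}
    (h : ∀ w ∈ S, ∃ j ∈ t, ∃ u, w = u ++ [j]) :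
    S.ncard = ∑ j ∈ t, {w ∈ S | ∃ u, w = u ++ [j]}.ncard := by
  classical
  have hfiber (j : α) : {w ∈ S | ∃ u, w = u ++ [j]} =
      ↑(hS.toFinset.filter (fun w => w.getLast? = some j)) := by
    ext w
    simp [List.getLast?_eq_some_iff]
  rw [Set.ncard_eq_toFinset_card S hS, Finset.card_eq_sum_card_fiberwise
    (f := List.getLast?) (t := t.map ⟨some, Option.some_injective α⟩), Finset.sum_map]
  · simp only [hfiber, Set.ncard_coe_finset, Function.Embedding.coeFn_mk]
  · intro w hw
    obtain ⟨j, hj, u, rfl⟩ := h w (hS.mem_toFinset.mp hw)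
    simpa using hj

lemma Set.ncard_sep_add_ncard_sep_not {α : Type*} {S : Set α} (hS : S.Finite) (p : α → Prop) :
    {x ∈ S | p x}.ncard + {x ∈ S | ¬ p x}.ncard = S.ncard :=
  Set.ncard_inter_add_ncard_sdiff_eq_ncard S {x | p x} hS

lemma Finset.sum_Icc_zero_sub {M : Type*} [AddCommMonoid M] (f : ℕ → M) {a n : ℕ} (h : a ≤ n) :
    ∑ d ∈ Finset.Icc 0 (n - a), f (n - d) = ∑ m ∈ Finset.Icc a n, f m :=
  Finset.sum_nbij' (n - ·) (n - ·) (fun _ h => by simp only [Finset.mem_Icc] at h ⊢; omega)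
    (fun _ h => by simp only [Finset.mem_Icc] at h ⊢; omega)
    (fun _ h => by simp only [Finset.mem_Icc] at h; omega)
    (fun _ h => by simp only [Finset.mem_Icc] at h; omega) (fun _ _ => rfl)

namespace IsPermOf

variable {n : ℕ} {w : List ℕ}

lemma mem_iff (h : IsPermOf n w) {x : ℕ} : x ∈ w ↔ 1 ≤ x ∧ x ≤ n := by
  rw [List.Perm.mem_iff h, List.mem_map]
  simp only [List.mem_range]
  constructor
  · rintro ⟨i, hi, rfl⟩
    omega
  · rintro ⟨h1, h2⟩
    exact ⟨x - 1, by omega, by omega⟩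

lemma length_eq (h : IsPermOf n w) : w.length = n := by
  simpa using List.Perm.length_eq h

lemma nodup (h : IsPermOf n w) : w.Nodup :=
  (List.Perm.nodup_iff h).mpr <| List.nodup_range.map fun _ _ => Nat.succ.inj

lemma exists_eq_append_last (h : IsPermOf n w) (hn : 1 ≤ n) :
    ∃ j ∈ Finset.Icc 1 n, ∃ u, w = u ++ [j] := by
  have hw : w ≠ [] := List.ne_nil_of_length_pos (by rw [h.length_eq]; omega)
  exact ⟨w.getLast hw, Finset.mem_Icc.mpr (h.mem_iff.mp (List.getLast_mem hw)),
    w.dropLast, (List.dropLast_append_getLast hw).symm⟩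

lemma exists_eq_append_one (h : IsPermOf n w) (hn : 1 ≤ n) :
    ∃ s t, w = s ++ 1 :: t ∧ (∀ x ∈ s, 2 ≤ x) ∧ ∀ x ∈ t, 2 ≤ x := by
  obtain ⟨s, t, rfl⟩ := List.append_of_mem (h.mem_iff.mpr ⟨le_rfl, hn⟩)
  have hnd := h.nodup
  simp only [List.nodup_append, List.nodup_cons, List.mem_cons] at hnd
  refine ⟨s, t, rfl, fun x hx => ?_, fun x hx => ?_⟩
  · have := (h.mem_iff (x := x)).mp (by simp [hx])
    have := hnd.2.2 x hx 1 (Or.inl rfl)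
    omega
  · have := (h.mem_iff (x := x)).mp (by simp [hx])
    have : x ≠ 1 := fun hx1 => hnd.2.1.1 (hx1 ▸ hx)
    omega

lemma setOf_finite (n : ℕ) : {w | IsPermOf n w}.Finite :=
  ((List.range n).map (· + 1)).permutations.toFinset.finite_toSet.subset
    fun _ hw => List.mem_toFinset.mpr (List.mem_permutations.mpr hw)

end IsPermOf

namespace PermPatterns

def succAbove (k q : ℕ) : ℕ := if q < k then q else q + 1

lemma strictMono_succAbove (k : ℕ) : StrictMono (succAbove k) := by
  intro q q' h
  unfold succAbove
  split_ifs <;> omega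

lemma succAbove_add_one {k q : ℕ} (h : q + 1 ≠ k) : succAbove k (q + 1) = succAbove k q + 1 := by
  unfold succAbove
  split_ifs <;> omega

lemma exists_succAbove_eq {k r : ℕ} (h : r ≠ k) : ∃ q, succAbove k q = r := by
  refine ⟨if r < k then r else r - 1, ?_⟩
  unfold succAbove
  split_ifs <;> omega

lemma succAbove_add_one_ne_iff {k q : ℕ} : succAbove k q + 1 ≠ k ↔ q + 1 ≠ k := by
  unfold succAbove
  split_ifs <;> omega

lemma succAbove_lt_add_one_iff {k m q : ℕ} (hk : k ≤ m) : succAbove k q < m + 1 ↔ q < m := by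
  unfold succAbove
  split_ifs <;> omega

section InsertIdx

variable {g : ℕ → ℕ} {l : List ℕ} {k : ℕ}

lemma length_insertIdx_map (hk : k ≤ l.length) (x : ℕ) :
    ((l.map g).insertIdx k x).length = l.length + 1 := by
  simp [List.length_insertIdx, hk]

lemma getD_insertIdx_map_succAbove (x : ℕ) {q : ℕ} (hq : q < l.length) :
    ((l.map g).insertIdx k x).getD (succAbove k q) 0 = g (l.getD q 0) := by
  simp only [List.getD_eq_getElem?_getD, List.getElem?_insertIdx, succAbove]
  split_ifs <;> first | omega | simp [List.getElem?_eq_getElem hq]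

lemma getD_insertIdx_map_self (hk : k ≤ l.length) (x : ℕ) :
    ((l.map g).insertIdx k x).getD k 0 = x := by
  simp [List.getD_eq_getElem?_getD, List.getElem?_insertIdx, hk]

end InsertIdx

/-- `Occ123 w` unfolds to `∃ a c, Occ123At w a c`, and `Occ4123` likewise. -/
def Occ123At (w : List ℕ) (a c : ℕ) : Prop :=
  a + 1 < c ∧ c < w.length ∧ w.getD a 0 < w.getD (a + 1) 0 ∧ w.getD (a + 1) 0 < w.getD c 0

def Occ4123At (w : List ℕ) (a b c : ℕ) : Prop :=
  a < b ∧ b < c ∧ c + 1 < w.length ∧ w.getD b 0 < w.getD c 0 ∧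
    w.getD c 0 < w.getD (c + 1) 0 ∧ w.getD (c + 1) 0 < w.getD a 0

/- Inserting a letter at position `k` into a relabelled copy `l.map g` keeps the occurrences of
`l` whose adjacent pairs it does not split, and every occurrence avoiding position `k` comes from
one of `l`. -/
section Transfer

variable {g : ℕ → ℕ} {l : List ℕ} {k : ℕ}

lemma occ123_insertIdx_map (hg : StrictMono g) (hk : k ≤ l.length) (x : ℕ) {a c : ℕ}
    (h : Occ123At l a c) (hak : a + 1 ≠ k) : Occ123 ((l.map g).insertIdx k x) := by
  obtain ⟨hac, hc, h1, h2⟩ := h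
  refine ⟨succAbove k a, succAbove k c, ?_, ?_, ?_⟩
  · rw [← succAbove_add_one hak]
    exact strictMono_succAbove k hac
  · rwa [length_insertIdx_map hk, succAbove_lt_add_one_iff hk]
  · rw [← succAbove_add_one hak]
    simp only [getD_insertIdx_map_succAbove x (show a < l.length by omega),
      getD_insertIdx_map_succAbove x (show a + 1 < l.length by omega),
      getD_insertIdx_map_succAbove x hc]
    exact ⟨hg h1, hg h2⟩

lemma occ123_of_insertIdx_map (hg : StrictMono g) (hk : k ≤ l.length) (x : ℕ) {a c : ℕ}
    (h : Occ123At ((l.map g).insertIdx k x) a c) (ha : a ≠ k) (ha' : a + 1 ≠ k) (hc : c ≠ k) :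
    Occ123 l := by
  obtain ⟨a, rfl⟩ := exists_succAbove_eq ha
  obtain ⟨c, rfl⟩ := exists_succAbove_eq hc
  have hf := strictMono_succAbove k
  obtain ⟨hac, hcl, h1, h2⟩ := h
  rw [succAbove_add_one_ne_iff] at ha'
  rw [length_insertIdx_map hk, succAbove_lt_add_one_iff hk] at hcl
  rw [← succAbove_add_one ha', hf.lt_iff_lt] at hac
  rw [← succAbove_add_one ha'] at h1 h2
  simp only [getD_insertIdx_map_succAbove x (show a < l.length by omega),
    getD_insertIdx_map_succAbove x (show a + 1 < l.length by omega),
    getD_insertIdx_map_succAbove x hcl, hg.lt_iff_lt] at h1 h2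
  exact ⟨a, c, hac, hcl, h1, h2⟩

lemma occ4123_insertIdx_map (hg : StrictMono g) (hk : k ≤ l.length) (x : ℕ) {a b c : ℕ}
    (h : Occ4123At l a b c) (hck : c + 1 ≠ k) : Occ4123 ((l.map g).insertIdx k x) := by
  obtain ⟨hab, hbc, hc, h1, h2, h3⟩ := h
  have hf := strictMono_succAbove k
  refine ⟨succAbove k a, succAbove k b, succAbove k c, hf hab, hf hbc, ?_, ?_⟩
  · rw [← succAbove_add_one hck, length_insertIdx_map hk, succAbove_lt_add_one_iff hk]
    exact hc
  · rw [← succAbove_add_one hck]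
    simp only [getD_insertIdx_map_succAbove x (show a < l.length by omega),
      getD_insertIdx_map_succAbove x (show b < l.length by omega),
      getD_insertIdx_map_succAbove x (show c < l.length by omega),
      getD_insertIdx_map_succAbove x hc]
    exact ⟨hg h1, hg h2, hg h3⟩

lemma occ4123_of_insertIdx_map (hg : StrictMono g) (hk : k ≤ l.length) (x : ℕ) {a b c : ℕ}
    (h : Occ4123At ((l.map g).insertIdx k x) a b c) (ha : a ≠ k) (hb : b ≠ k) (hc : c ≠ k)
    (hc' : c + 1 ≠ k) : Occ4123 l := by
  obtain ⟨a, rfl⟩ := exists_succAbove_eq ha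
  obtain ⟨b, rfl⟩ := exists_succAbove_eq hb
  obtain ⟨c, rfl⟩ := exists_succAbove_eq hc
  have hf := strictMono_succAbove k
  obtain ⟨hab, hbc, hcl, h1, h2, h3⟩ := h
  rw [succAbove_add_one_ne_iff] at hc'
  rw [← succAbove_add_one hc'] at hcl h2 h3
  rw [length_insertIdx_map hk, succAbove_lt_add_one_iff hk] at hcl
  rw [hf.lt_iff_lt] at hab hbc
  simp only [getD_insertIdx_map_succAbove x (show a < l.length by omega),
    getD_insertIdx_map_succAbove x (show b < l.length by omega),
    getD_insertIdx_map_succAbove x (show c < l.length by omega),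
    getD_insertIdx_map_succAbove x hcl, hg.lt_iff_lt] at h1 h2 h3
  exact ⟨a, b, c, hab, hbc, hcl, h1, h2, h3⟩

end Transfer

def expandLetter (x : ℕ) : List ℕ := if x = 1 then [2, 1] else [x + 1]

def expand (v : List ℕ) : List ℕ := v.flatMap expandLetter

def contractLetter (x : ℕ) : List ℕ := if x = 1 then [] else [x - 1]

def contract (w : List ℕ) : List ℕ := w.flatMap contractLetter

lemma expand_eq_map {l : List ℕ} (h : 1 ∉ l) : expand l = l.map (· + 1) := by
  rw [expand, ← List.flatMap_pure_eq_map]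
  exact List.flatMap_congr fun x hx => if_neg (ne_of_mem_of_not_mem hx h)

lemma contract_eq_map {l : List ℕ} (h : 1 ∉ l) : contract l = l.map (· - 1) := by
  rw [contract, ← List.flatMap_pure_eq_map]
  exact List.flatMap_congr fun x hx => if_neg (ne_of_mem_of_not_mem hx h)

lemma contract_map_add_one {l : List ℕ} (h : 0 ∉ l) : contract (l.map (· + 1)) = l := by
  rw [contract_eq_map (by simpa using h), List.map_map]
  exact List.map_id'' (fun _ => rfl) l

lemma expand_append (a b : List ℕ) : expand (a ++ b) = expand a ++ expand b :=
  List.flatMap_append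

lemma contract_append (a b : List ℕ) : contract (a ++ b) = contract a ++ contract b :=
  List.flatMap_append

lemma expand_contract_of_forall_three_le {l : List ℕ} (h : ∀ x ∈ l, 3 ≤ x) :
    expand (contract l) = l := by
  have h1 : 1 ∉ l.map (· - 1) := by
    rw [List.mem_map]
    rintro ⟨x, hx, hx1⟩
    have := h x hx
    omega
  rw [contract_eq_map fun h1 => by simpa using h 1 h1, expand_eq_map h1, List.map_map]
  refine (List.map_congr_left fun x hx => ?_).trans (List.map_id l)
  have := h x hx
  simp only [Function.comp_apply, id_eq]
  omega

lemma contract_expand {v : List ℕ} (h : ∀ x ∈ v, 1 ≤ x) : contract (expand v) = v := by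
  rw [contract, expand, List.flatMap_assoc]
  refine (List.flatMap_congr fun x hx => ?_).trans (List.flatMap_singleton' v)
  by_cases hx1 : x = 1
  · simp [hx1, expandLetter, contractLetter]
  · simp [hx1, expandLetter, contractLetter, Nat.one_le_iff_ne_zero.mp (h x hx)]

lemma range_succ_map_add_one (m : ℕ) :
    (List.range (m + 1)).map (· + 1) = 1 :: ((List.range m).map (· + 1)).map (· + 1) := by
  simp [List.range_succ_eq_map, List.map_map, Function.comp_def]

lemma isPermOf_expand {m : ℕ} {v : List ℕ} (hv : IsPermOf m v) (hm : 1 ≤ m) :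
    IsPermOf (m + 1) (expand v) := by
  obtain ⟨m, rfl⟩ := Nat.exists_eq_add_of_le' hm
  refine (List.Perm.flatMap_right expandLetter hv).trans ?_
  rw [range_succ_map_add_one (m + 1), range_succ_map_add_one m, List.map_cons]
  have h1 : 1 ∉ ((List.range m).map (· + 1)).map (· + 1) := by simp
  rw [List.flatMap_cons, ← expand, expand_eq_map h1]
  exact List.Perm.swap _ _ _

lemma isPermOf_contract {m : ℕ} {w : List ℕ} (hw : IsPermOf (m + 1) w) :
    IsPermOf m (contract w) := by
  refine (List.Perm.flatMap_right contractLetter hw).trans ?_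
  rw [range_succ_map_add_one, List.flatMap_cons, ← contract, contract_map_add_one (by simp)]
  rfl

lemma one_le_of_mem_expand {v : List ℕ} {x : ℕ} (hx : x ∈ expand v) : 1 ≤ x := by
  obtain ⟨y, -, hy⟩ := List.mem_flatMap.mp hx
  unfold expandLetter at hy
  split_ifs at hy <;> simp only [List.mem_cons, List.mem_nil_iff, or_false] at hy <;> omega

lemma map_succAbove_eq_map_add_one {k : ℕ} {l : List ℕ} (h : ∀ x ∈ l, k ≤ x) :
    l.map (succAbove k) = l.map (· + 1) :=
  List.map_congr_left fun x hx => if_neg (not_lt.mpr (h x hx))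

section SplitAtOne

variable {s t : List ℕ}

lemma expand_append_one_cons (hs : ∀ x ∈ s, 2 ≤ x) (ht : ∀ x ∈ t, 2 ≤ x) :
    expand (s ++ 1 :: t) = s.map (· + 1) ++ 2 :: 1 :: t.map (· + 1) := by
  have hs1 : 1 ∉ s := fun h => by simpa using hs 1 h
  have ht1 : 1 ∉ t := fun h => by simpa using ht 1 h
  simp only [expand, List.flatMap_append, List.flatMap_cons]
  rw [← expand, ← expand, expand_eq_map hs1, expand_eq_map ht1]
  rfl

lemma expand_eq_insertIdx_one (hs : ∀ x ∈ s, 2 ≤ x) (ht : ∀ x ∈ t, 2 ≤ x) :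
    expand (s ++ 1 :: t) = ((s ++ 1 :: t).map (succAbove 1)).insertIdx (s.length + 1) 1 := by
  rw [List.map_append, List.map_cons,
    map_succAbove_eq_map_add_one fun x hx => (hs x hx).trans' one_le_two,
    map_succAbove_eq_map_add_one fun x hx => (ht x hx).trans' one_le_two,
    ← List.length_map (f := (· + 1)), List.insertIdx_append_length_add,
    expand_append_one_cons hs ht]
  rfl

lemma expand_eq_insertIdx_two (hs : ∀ x ∈ s, 2 ≤ x) (ht : ∀ x ∈ t, 2 ≤ x) :
    expand (s ++ 1 :: t) = ((s ++ 1 :: t).map (succAbove 2)).insertIdx s.length 2 := by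
  rw [List.map_append, List.map_cons, map_succAbove_eq_map_add_one hs,
    map_succAbove_eq_map_add_one ht, ← List.length_map (f := (· + 1)),
    ← add_zero (List.length _), List.insertIdx_append_length_add, expand_append_one_cons hs ht]
  rfl

lemma getD_expand_length (hs : ∀ x ∈ s, 2 ≤ x) (ht : ∀ x ∈ t, 2 ≤ x) :
    (expand (s ++ 1 :: t)).getD s.length 0 = 2 := by
  rw [expand_eq_insertIdx_two hs ht]
  exact getD_insertIdx_map_self (by simp) 2

lemma getD_expand_length_add_one (hs : ∀ x ∈ s, 2 ≤ x) (ht : ∀ x ∈ t, 2 ≤ x) :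
    (expand (s ++ 1 :: t)).getD (s.length + 1) 0 = 1 := by
  rw [expand_eq_insertIdx_one hs ht]
  exact getD_insertIdx_map_self (by simp) 1

/- An occurrence in `expand v` uses at most one of the positions of the factor `2 1`; deleting
the other one leaves a list order-isomorphic to `s ++ 1 :: t`. -/
lemma occ123_expand_iff (hs : ∀ x ∈ s, 2 ≤ x) (ht : ∀ x ∈ t, 2 ≤ x) :
    Occ123 (expand (s ++ 1 :: t)) ↔ Occ123 (s ++ 1 :: t) := by
  have hlen : s.length + 1 ≤ (s ++ 1 :: t).length := by simp
  have e1 := expand_eq_insertIdx_one hs ht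
  have e2 := expand_eq_insertIdx_two hs ht
  constructor
  · rintro ⟨a, c, hocc⟩
    obtain ⟨hac, hc, h1, h2⟩ := id hocc
    have hp := getD_expand_length hs ht
    have hp1 := getD_expand_length_add_one hs ht
    have ha1 := one_le_of_mem_expand
      (List.getD_mem_of_lt 0 (show a < (expand (s ++ 1 :: t)).length by omega))
    have ha : a ≠ s.length := by rintro rfl; omega
    have hcp : c ≠ s.length := by rintro rfl; omega
    have hcp1 : c ≠ s.length + 1 := by rintro rfl; omega
    by_cases ha' : a = s.length + 1
    · rw [e2] at hocc
      exact occ123_of_insertIdx_map (strictMono_succAbove 2) (by omega) 2 hocc (by omega)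
        (by omega) hcp
    · rw [e1] at hocc
      exact occ123_of_insertIdx_map (strictMono_succAbove 1) hlen 1 hocc ha' (by omega) hcp1
  · rintro ⟨a, c, hocc⟩
    by_cases ha : a = s.length
    · rw [e2]
      exact occ123_insertIdx_map (strictMono_succAbove 2) (by omega) 2 hocc (by omega)
    · rw [e1]
      exact occ123_insertIdx_map (strictMono_succAbove 1) hlen 1 hocc (by omega)

lemma occ4123_expand_iff (hs : ∀ x ∈ s, 2 ≤ x) (ht : ∀ x ∈ t, 2 ≤ x) :
    Occ4123 (expand (s ++ 1 :: t)) ↔ Occ4123 (s ++ 1 :: t) := by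
  have hlen : s.length + 1 ≤ (s ++ 1 :: t).length := by simp
  have e1 := expand_eq_insertIdx_one hs ht
  have e2 := expand_eq_insertIdx_two hs ht
  constructor
  · rintro ⟨a, b, c, hocc⟩
    obtain ⟨hab, hbc, hc, h1, h2, h3⟩ := id hocc
    have hp := getD_expand_length hs ht
    have hp1 := getD_expand_length_add_one hs ht
    have hb1 := one_le_of_mem_expand
      (List.getD_mem_of_lt 0 (show b < (expand (s ++ 1 :: t)).length by omega))
    have hap : a ≠ s.length := by rintro rfl; omega
    have hap1 : a ≠ s.length + 1 := by rintro rfl; omega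
    have hcp1 : c ≠ s.length + 1 := by rintro rfl; omega
    have hc1p : c + 1 ≠ s.length := fun h => by rw [h] at h2; omega
    have hc1p1 : c + 1 ≠ s.length + 1 := fun h => by rw [h] at h2; omega
    by_cases hb : b = s.length + 1
    · rw [e2] at hocc
      exact occ4123_of_insertIdx_map (strictMono_succAbove 2) (by omega) 2 hocc hap (by omega)
        (by omega) hc1p
    · rw [e1] at hocc
      exact occ4123_of_insertIdx_map (strictMono_succAbove 1) hlen 1 hocc hap1 hb hcp1 hc1p1
  · rintro ⟨a, b, c, hocc⟩
    by_cases hc : c = s.length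
    · rw [e2]
      exact occ4123_insertIdx_map (strictMono_succAbove 2) (by omega) 2 hocc (by omega)
    · rw [e1]
      exact occ4123_insertIdx_map (strictMono_succAbove 1) hlen 1 hocc (by omega)

end SplitAtOne

def Eset (n : ℕ) : Set (List ℕ) := {w ∈ Lset n | w.idxOf 1 < w.idxOf n}

def Fset (n : ℕ) : Set (List ℕ) := {w ∈ Eset n | w.idxOf 2 < w.idxOf n}

section Expand

variable {m : ℕ} {v : List ℕ}

lemma expand_mem_Lset_iff (hv : IsPermOf m v) (hm : 1 ≤ m) :
    expand v ∈ Lset (m + 1) ↔ v ∈ Lset m := by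
  obtain ⟨s, t, rfl, hs, ht⟩ := hv.exists_eq_append_one hm
  simp [Lset, occ123_expand_iff hs ht, occ4123_expand_iff hs ht, hv, isPermOf_expand hv hm]

lemma expand_mem_Fset_iff (hv : IsPermOf m v) (hm : 2 ≤ m) :
    expand v ∈ Fset (m + 1) ↔ v ∈ Eset m := by
  have hL := expand_mem_Lset_iff hv (by omega)
  obtain ⟨s, t, rfl, hs, ht⟩ := hv.exists_eq_append_one (by omega)
  have hs1 : 1 ∉ s := fun h => by simpa using hs 1 h
  have hs2 : 2 ∉ s.map (· + 1) := by simpa using hs1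
  have hs3 : 1 ∉ s.map (· + 1) ++ [2] := by simpa using fun h0 => by simpa using hs 0 h0
  have hidx1 := List.idxOf_lt_idxOf_iff_notMem (t := t) (b := m) hs1 (by omega)
  have hidx2 := List.idxOf_lt_idxOf_iff_notMem (t := 1 :: t.map (· + 1)) (b := m + 1) hs2
    (by omega)
  have hidx3 := List.idxOf_lt_idxOf_iff_notMem (t := t.map (· + 1)) (b := m + 1) hs3 (by omega)
  simp only [List.append_assoc, List.singleton_append] at hidx3
  simp only [List.mem_append, List.mem_map, List.mem_singleton, add_left_inj, exists_eq_right,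
    show m + 1 ≠ 2 by omega, or_false] at hidx2 hidx3
  simp only [Fset, Eset, Set.mem_ofPred_eq] at hL ⊢
  rw [expand_append_one_cons hs ht] at hL ⊢
  rw [hL, hidx1, hidx2, hidx3]
  tauto

end Expand

section Adjacency

variable {n : ℕ} {w : List ℕ}

lemma occ123_of_ascent_before_idxOf (hw : IsPermOf n w) (hn : 1 ≤ n) {i : ℕ}
    (hi : i + 1 < w.idxOf n) (hasc : w.getD i 0 < w.getD (i + 1) 0) : Occ123 w := by
  have hmem : n ∈ w := hw.mem_iff.mpr ⟨hn, le_rfl⟩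
  have hlt := List.idxOf_lt_length_of_mem hmem
  have hne : w.getD (i + 1) 0 ≠ n := hw.nodup.getD_ne_of_ne_idxOf (by omega) (by omega)
  have hle := (hw.mem_iff.mp (List.getD_mem_of_lt 0 (show i + 1 < w.length by omega))).2
  exact ⟨i, w.idxOf n, hi, hlt, hasc, by rw [List.getD_idxOf 0 hmem]; omega⟩

lemma idxOf_one_eq_idxOf_two_add_one (hn : 3 ≤ n) (hw : IsPermOf n w) (h123 : ¬ Occ123 w)
    (h1 : w.idxOf 1 < w.idxOf n) (h2 : w.idxOf 2 < w.idxOf n) :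
    w.idxOf 1 = w.idxOf 2 + 1 := by
  have hmem1 : 1 ∈ w := hw.mem_iff.mpr ⟨le_rfl, by omega⟩
  have hmem2 : 2 ∈ w := hw.mem_iff.mpr ⟨one_le_two, by omega⟩
  have hne : w.idxOf 1 ≠ w.idxOf 2 := fun h => by simpa using (List.idxOf_inj hmem1).mp h
  have hlt : w.idxOf n < w.length :=
    List.idxOf_lt_length_of_mem (hw.mem_iff.mpr ⟨by omega, le_rfl⟩)
  by_contra hadj
  rcases hne.lt_or_gt with h12 | h21
  · refine h123 (occ123_of_ascent_before_idxOf hw (by omega) (i := w.idxOf 1) (by omega) ?_)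
    have := hw.mem_iff.mp (List.getD_mem_of_lt 0 (show w.idxOf 1 + 1 < w.length by omega))
    have := hw.nodup.getD_ne_of_ne_idxOf (x := 1) (d := 0) (i := w.idxOf 1 + 1) (by omega)
      (by omega)
    rw [List.getD_idxOf 0 hmem1]
    omega
  · refine h123 (occ123_of_ascent_before_idxOf hw (by omega) (i := w.idxOf 2) (by omega) ?_)
    have := hw.mem_iff.mp (List.getD_mem_of_lt 0 (show w.idxOf 2 + 1 < w.length by omega))
    have := hw.nodup.getD_ne_of_ne_idxOf (x := 1) (d := 0) (i := w.idxOf 2 + 1) (by omega)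
      (Ne.symm hadj)
    have := hw.nodup.getD_ne_of_ne_idxOf (x := 2) (d := 0) (i := w.idxOf 2 + 1) (by omega)
      (by omega)
    rw [List.getD_idxOf 0 hmem2]
    omega

lemma exists_eq_append_two_one_cons (hn : 3 ≤ n) (hw : w ∈ Fset n) :
    ∃ s t, w = s ++ 2 :: 1 :: t := by
  obtain ⟨⟨⟨hperm, h123, -⟩, h1⟩, h2⟩ := hw
  have hadj := idxOf_one_eq_idxOf_two_add_one hn hperm h123 h1 h2
  have hlt : w.idxOf 1 < w.length :=
    List.idxOf_lt_length_of_mem (hperm.mem_iff.mpr ⟨le_rfl, by omega⟩)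
  refine ⟨w.take (w.idxOf 2), w.drop (w.idxOf 1 + 1), ?_⟩
  conv_lhs => rw [← List.take_append_drop (w.idxOf 2) w,
    List.drop_eq_getElem_cons (by omega), List.drop_eq_getElem_cons (by omega)]
  simp only [← hadj, List.getElem_idxOf]

end Adjacency

section Bijection

variable {m : ℕ}

lemma expand_contract_of_mem_Fset {w : List ℕ} (hm : 2 ≤ m) (hw : w ∈ Fset (m + 1)) :
    expand (contract w) = w := by
  have hperm := hw.1.1.1
  obtain ⟨s, t, rfl⟩ := exists_eq_append_two_one_cons (by omega) hw
  have hnd := hperm.nodup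
  simp only [List.nodup_append, List.nodup_cons, List.mem_cons, not_or] at hnd
  have hs : ∀ x ∈ s, 3 ≤ x := fun x hx => by
    have := (hperm.mem_iff (x := x)).mp (by simp [hx])
    have := hnd.2.2 x hx 2 (Or.inl rfl)
    have := hnd.2.2 x hx 1 (Or.inr (Or.inl rfl))
    omega
  have ht : ∀ x ∈ t, 3 ≤ x := fun x hx => by
    have := (hperm.mem_iff (x := x)).mp (by simp [hx])
    have : x ≠ 2 := fun h2 => hnd.2.1.1.2 (h2 ▸ hx)
    have : x ≠ 1 := fun h1 => hnd.2.1.2.1 (h1 ▸ hx)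
    omega
  rw [show s ++ 2 :: 1 :: t = s ++ [2, 1] ++ t by simp, contract_append,
    contract_append, expand_append, expand_append, expand_contract_of_forall_three_le hs,
    expand_contract_of_forall_three_le ht]
  rfl

lemma Fset_eq_image_expand (hm : 2 ≤ m) : Fset (m + 1) = expand '' Eset m := by
  ext w
  constructor
  · intro hw
    have hv := isPermOf_contract hw.1.1.1
    have hexp := expand_contract_of_mem_Fset hm hw
    exact ⟨contract w, (expand_mem_Fset_iff hv hm).mp (by rwa [hexp]), hexp⟩
  · rintro ⟨v, hv, rfl⟩
    exact (expand_mem_Fset_iff hv.1.1 hm).mpr hv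

lemma ncard_Fset (hm : 2 ≤ m) : (Fset (m + 1)).ncard = (Eset m).ncard := by
  rw [Fset_eq_image_expand hm]
  refine Set.InjOn.ncard_image fun v hv v' hv' h => ?_
  rw [← contract_expand fun x hx => (hv.1.1.mem_iff.mp hx).1, h,
    contract_expand fun x hx => (hv'.1.1.mem_iff.mp hx).1]

end Bijection

lemma Lset_finite (n : ℕ) : (Lset n).Finite :=
  (IsPermOf.setOf_finite n).subset fun _ hw => hw.1

lemma not_idxOf_lt_idxOf_excludedPerm {n x : ℕ} (hx1 : 1 ≤ x) (hxn : x < n) :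
    ¬ (excludedPerm n).idxOf n < (excludedPerm n).idxOf x := by
  rw [excludedPerm, List.idxOf_lt_idxOf_iff_notMem (by
    simp only [List.mem_reverse, List.mem_map, List.mem_range, not_exists, not_and]
    omega) (by omega), not_not]
  simp only [List.mem_reverse, List.mem_map, List.mem_range]
  exact ⟨x - 1, by omega, by omega⟩

lemma sep_Lset_not_eq_Bset {n : ℕ} (hn : 2 ≤ n) :
    {w ∈ Lset n | ¬ w.idxOf 1 < w.idxOf n} = Bset n := by
  ext w
  simp only [Bset, Lstar, Set.mem_sdiff, Set.mem_singleton_iff, Set.mem_ofPred_eq]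
  constructor
  · rintro ⟨hw, h⟩
    have hne : w.idxOf 1 ≠ w.idxOf n := fun h' => by
      have := (List.idxOf_inj (hw.1.mem_iff.mpr ⟨le_rfl, by omega⟩)).mp h'
      omega
    refine ⟨⟨hw, ?_⟩, by omega⟩
    rintro rfl
    exact not_idxOf_lt_idxOf_excludedPerm (n := n) (x := 1) le_rfl (by omega) (by omega)
  · rintro ⟨⟨hw, -⟩, h⟩
    exact ⟨hw, by omega⟩

lemma sep_Eset_not_eq_Cset {n : ℕ} (hn : 3 ≤ n) :
    {w ∈ Eset n | ¬ w.idxOf 2 < w.idxOf n} = Cset n := by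
  ext w
  simp only [Eset, Cset, Lstar, Set.mem_sdiff, Set.mem_singleton_iff, Set.mem_ofPred_eq]
  constructor
  · rintro ⟨⟨hw, h1⟩, h⟩
    have hne : w.idxOf 2 ≠ w.idxOf n := fun h' => by
      have := (List.idxOf_inj (hw.1.mem_iff.mpr ⟨one_le_two, by omega⟩)).mp h'
      omega
    refine ⟨⟨hw, ?_⟩, h1, by omega⟩
    rintro rfl
    exact not_idxOf_lt_idxOf_excludedPerm (n := n) (x := 2) one_le_two (by omega) (by omega)
  · rintro ⟨⟨hw, -⟩, h1, h⟩
    exact ⟨⟨hw, h1⟩, by omega⟩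

lemma ncard_Lset {n : ℕ} (hn : 2 ≤ n) : (Lset n).ncard = (Eset n).ncard + (Bset n).ncard := by
  rw [← sep_Lset_not_eq_Bset hn]
  exact (Set.ncard_sep_add_ncard_sep_not (Lset_finite n) _).symm

lemma ncard_Eset_add_one {m : ℕ} (hm : 2 ≤ m) :
    (Eset (m + 1)).ncard = (Eset m).ncard + (Cset (m + 1)).ncard := by
  rw [← ncard_Fset hm, ← sep_Eset_not_eq_Cset (by omega)]
  exact (Set.ncard_sep_add_ncard_sep_not ((Lset_finite _).subset fun _ hw => hw.1) _).symm

lemma Eset_two : Eset 2 = {[1, 2]} := by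
  ext w
  constructor
  · rintro ⟨⟨hperm, -, -⟩, h⟩
    have : w = [1, 2] ∨ w = [2, 1] := by
      simpa [List.permutations, List.permutationsAux, List.permutationsAux.rec] using
        List.mem_permutations.mpr (show w ~ [1, 2] from hperm)
    rcases this with rfl | rfl
    · rfl
    · simp at h
  · rintro rfl
    refine ⟨⟨List.Perm.refl _, ?_, ?_⟩, by simp⟩
    · rintro ⟨a, c, hac, hc : c < 2, -⟩
      omega
    · rintro ⟨a, b, c, hab, hbc, hc : c + 1 < 2, -⟩
      omega

lemma Cset_two : Cset 2 = ∅ :=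
  Set.eq_empty_of_forall_notMem fun _ hw => lt_irrefl _ hw.2.2

lemma ncard_Eset {n : ℕ} (hn : 2 ≤ n) :
    (Eset n).ncard = 1 + ∑ m ∈ Finset.Icc 2 n, (Cset m).ncard := by
  induction n, hn using Nat.le_induction with
  | base => simp [Eset_two, Cset_two]
  | succ m hm ih => rw [ncard_Eset_add_one hm, ih, Finset.sum_Icc_succ_top (by omega), add_assoc]

lemma ncard_Bset_eq_sum {n : ℕ} (hn : 1 ≤ n) : (Bset n).ncard = ∑ j ∈ Finset.Icc 1 n, bLast n j :=
  Set.ncard_eq_sum_ncard_last ((Lset_finite n).subset fun _ hw => hw.1.1)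
    fun _ hw => hw.1.1.1.exists_eq_append_last hn

lemma ncard_Cset_eq_sum {n : ℕ} (hn : 1 ≤ n) : (Cset n).ncard = ∑ i ∈ Finset.Icc 1 n, cLast n i :=
  Set.ncard_eq_sum_ncard_last ((Lset_finite n).subset fun _ hw => hw.1.1)
    fun _ hw => hw.1.1.1.exists_eq_append_last hn

end PermPatterns

open PermPatterns in
theorem stmt16 (n : ℕ) (hn : 2 ≤ n) :
    (Lset n).ncard = 1 + (∑ j ∈ Finset.Icc 1 n, bLast n j) +
      ∑ d ∈ Finset.Icc 0 (n - 2), ∑ i ∈ Finset.Icc 1 (n - d), cLast (n - d) i := by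
  have hC : ∀ d ∈ Finset.Icc 0 (n - 2),
      ∑ i ∈ Finset.Icc 1 (n - d), cLast (n - d) i = (Cset (n - d)).ncard := fun d hd =>
    (ncard_Cset_eq_sum (by have := (Finset.mem_Icc.mp hd).2; omega)).symm
  rw [Finset.sum_congr rfl hC, Finset.sum_Icc_zero_sub (fun m => (Cset m).ncard) hn,
    ← ncard_Bset_eq_sum (by omega), ncard_Lset hn, ncard_Eset hn]
  ring
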